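/- If the set P of processes has at most 3 elements, then every global type G over P is commutation-closed, i.e. L∃(G) = L∀(G). -/
import Mathlib


/-! ## Common definitions: actions, executions, MSCs, communication models,
communicating finite state machines, and global types. -/

/-- Actions: a send `p▷q!m` or a receive `p▷q?m`. -/
inductive Act (P M : Type) : Type where
  | snd (p q : P) (m : M)
  | rcv (p q : P) (m : M)
deriving DecidableEq

namespace Act
variable {P M : Type}

/-- The process executing an action: a send belongs to the sender,
a receive belongs to the receiver. -/
def proc : Act P M → P
  | .snd p _ _ => p
  | .rcv _ q _ => q

end Act

/-- Raw executions: a word of actions together with a source function on positions. -/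
structure Exec (P M : Type) : Type where
  w : List (Act P M)
  src : ℕ → ℕ

namespace Exec
variable {P M : Type}

def act? (e : Exec P M) (i : ℕ) : Option (Act P M) := e.w[i]?

def IsSend (e : Exec P M) (i : ℕ) : Prop := ∃ p q m, e.act? i = some (.snd p q m)

def IsRecv (e : Exec P M) (i : ℕ) : Prop := ∃ p q m, e.act? i = some (.rcv p q m)

/-- Well-formedness of an execution: each receive event `r` labelled `p▷q?m` has a
source send event `src r < r` labelled `p▷q!m`, and `src` is injective on receive events. -/
def WF (e : Exec P M) : Prop :=
  (∀ i p q m, e.act? i = some (.rcv p q m) →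
    e.src i < i ∧ e.act? (e.src i) = some (.snd p q m)) ∧
  (∀ i j, e.IsRecv i → e.IsRecv j → e.src i = e.src j → i = j)

/-- A send event is matched if it is the source of some receive event. -/
def Matched (e : Exec P M) (s : ℕ) : Prop := ∃ r, e.IsRecv r ∧ e.src r = s

def OrphanFree (e : Exec P M) : Prop := ∀ s, e.IsSend s → e.Matched s

/-- Prefix of executions: the word is a prefix and the source functions agree
on the receive events of the shorter one. -/
def IsPrefix (e₁ e₂ : Exec P M) : Prop :=
  e₁.w <+: e₂.w ∧ ∀ i, e₁.IsRecv i → e₁.src i = e₂.src i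

/-- Projection of an execution onto the actions of a process. -/
def proj (e : Exec P M) [DecidableEq P] (p : P) : List (Act P M) :=
  e.w.filter (fun a => decide (a.proc = p))

/-- The MSC event `(process, index within the process)` at a position of the word. -/
def evOf (e : Exec P M) [DecidableEq P] (i : ℕ) : Option (P × ℕ) :=
  (e.act? i).map
    (fun a => (a.proc, ((e.w.take i).filter (fun b => decide (b.proc = a.proc))).length))

/-- The position in the word of the `i`-th event of process `p`. -/
def posOf (e : Exec P M) [DecidableEq P] (ev : P × ℕ) : ℕ :=
  ((List.range e.w.length).filter
    (fun k => decide ((e.act? k).map Act.proc = some ev.1))).getD ev.2 0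

end Exec

/-- Raw MSCs: a word of actions per process, and a source function on events. -/
structure MSC (P M : Type) : Type where
  w : P → List (Act P M)
  src : P × ℕ → P × ℕ

namespace MSC
variable {P M : Type}

def act? (Mm : MSC P M) (ev : P × ℕ) : Option (Act P M) := (Mm.w ev.1)[ev.2]?

def IsSend (Mm : MSC P M) (ev : P × ℕ) : Prop := ∃ p q m, Mm.act? ev = some (.snd p q m)

def IsRecv (Mm : MSC P M) (ev : P × ℕ) : Prop := ∃ p q m, Mm.act? ev = some (.rcv p q m)

/-- Well-formedness of an MSC. -/
def WF (Mm : MSC P M) : Prop :=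
  (∀ p, ∀ a ∈ Mm.w p, a.proc = p) ∧
  (∀ ev p q m, Mm.act? ev = some (.rcv p q m) → Mm.act? (Mm.src ev) = some (.snd p q m)) ∧
  (∀ ev ev', Mm.IsRecv ev → Mm.IsRecv ev' → Mm.src ev = Mm.src ev' → ev = ev')

/-- Basic happens-before steps: process order and message order. -/
inductive hbBase (Mm : MSC P M) : P × ℕ → P × ℕ → Prop where
  | proc (p : P) (i j : ℕ) : i < j → j < (Mm.w p).length → hbBase Mm (p, i) (p, j)
  | msg (ev : P × ℕ) : Mm.IsRecv ev → hbBase Mm (Mm.src ev) ev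

/-- The happens-before relation: least transitive relation containing the basic steps. -/
def hb (Mm : MSC P M) : P × ℕ → P × ℕ → Prop := Relation.TransGen (hbBase Mm)

/-- Prefix of MSCs. -/
def IsPrefix (M₁ M₂ : MSC P M) : Prop :=
  (∀ p, M₁.w p <+: M₂.w p) ∧ ∀ ev, M₁.IsRecv ev → M₁.src ev = M₂.src ev

end MSC

/-- Prefix closure of a set of MSCs. -/
def prefSet {P M : Type} (X : Set (MSC P M)) : Set (MSC P M) :=
  {Mm | ∃ M' ∈ X, Mm.IsPrefix M'}

/-- The MSC of an execution: project onto each process and lift the source function. -/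
def Exec.toMSC {P M : Type} [DecidableEq P] (e : Exec P M) : MSC P M where
  w p := e.w.filter (fun a => decide (a.proc = p))
  src ev := (e.evOf (e.src (e.posOf ev))).getD ev

/-- The linearisations of an MSC, identified with the executions they induce. -/
def lin {P M : Type} [DecidableEq P] (Mm : MSC P M) : Set (Exec P M) :=
  {e | e.WF ∧ e.toMSC = Mm}

/-- The linearisations of an MSC lying in a communication model. -/
def linC {P M : Type} [DecidableEq P] (Com : Set (Exec P M)) (Mm : MSC P M) :
    Set (Exec P M) :=
  lin Mm ∩ Com

/-- A communication model (a set of executions) is causally closed if whenever an MSC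
has a linearisation in the model, all its linearisations are in the model. -/
def CausallyClosed {P M : Type} [DecidableEq P] (Com : Set (Exec P M)) : Prop :=
  ∀ Mm : MSC P M, (linC Com Mm).Nonempty → linC Com Mm = lin Mm

/-- The MSCs linearisable in a communication model. -/
def MSCModel {P M : Type} [DecidableEq P] (Com : Set (Exec P M)) : Set (MSC P M) :=
  {Mm | (linC Com Mm).Nonempty}

/-- The bag communication model: all executions. -/
def bag {P M : Type} : Set (Exec P M) := {e | e.WF}

/-- The synchronous communication model: every send is immediately followed by
its matching receive. -/
def synch {P M : Type} : Set (Exec P M) :=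
  {e | e.WF ∧ ∀ s, e.IsSend s → e.IsRecv (s + 1) ∧ e.src (s + 1) = s}

/-- The peer-to-peer communication model. -/
def p2p {P M : Type} : Set (Exec P M) :=
  {e | e.WF ∧ ∀ s₁ s₂ p q m₁ m₂,
    e.act? s₁ = some (.snd p q m₁) → e.act? s₂ = some (.snd p q m₂) → s₁ < s₂ →
    (¬ e.Matched s₂ ∨
      ∃ r₁ r₂, r₁ < r₂ ∧ e.IsRecv r₁ ∧ e.IsRecv r₂ ∧ e.src r₁ = s₁ ∧ e.src r₂ = s₂)}

/-- Happens-before between positions of an execution, through its MSC. -/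
def Exec.hbM {P M : Type} [DecidableEq P] (e : Exec P M) (i j : ℕ) : Prop :=
  ∃ ev₁ ev₂, e.evOf i = some ev₁ ∧ e.evOf j = some ev₂ ∧ e.toMSC.hb ev₁ ev₂

/-- The causally ordered communication model. -/
def causal {P M : Type} [DecidableEq P] : Set (Exec P M) :=
  {e | e.WF ∧ ∀ s₁ s₂ p₁ p₂ q m₁ m₂,
    e.act? s₁ = some (.snd p₁ q m₁) → e.act? s₂ = some (.snd p₂ q m₂) → e.hbM s₁ s₂ →
    (¬ e.Matched s₂ ∨
      ∃ r₁ r₂, e.hbM r₁ r₂ ∧ e.IsRecv r₁ ∧ e.IsRecv r₂ ∧ e.src r₁ = s₁ ∧ e.src r₂ = s₂)}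

/-- A communicating finite state machine: an NFA with ε-transitions
(over the actions of a process) with finitely many states. -/
structure CFSM (A : Type) : Type 1 where
  State : Type
  fin : Fintype State
  aut : εNFA A State

instance {A : Type} (c : CFSM A) : Fintype c.State := c.fin

/-- The machine obtained by making all states accepting. -/
def CFSM.up {A : Type} (c : CFSM A) : CFSM A :=
  ⟨c.State, c.fin, { c.aut with accept := Set.univ }⟩

/-- Making all states of all machines of a system accepting. -/
def sysUp {P M : Type} (S : P → CFSM (Act P M)) : P → CFSM (Act P M) :=
  fun p => (S p).up

/-- `Exec(S, Com)`: the executions of a system of CFSMs in a communication model. -/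
def ExecSys {P M : Type} [DecidableEq P] (S : P → CFSM (Act P M)) (Com : Set (Exec P M)) :
    Set (Exec P M) :=
  {e | e ∈ Com ∧ ∀ p, e.proj p ∈ (S p).aut.accepts}

/-- `MSC(S, Com)`: the MSCs of the executions of a system of CFSMs. -/
def MSCSys {P M : Type} [DecidableEq P] (S : P → CFSM (Act P M)) (Com : Set (Exec P M)) :
    Set (MSC P M) :=
  Exec.toMSC '' ExecSys S Com

/-- A system is deadlock-free for `Com` if every execution of the system with all states
accepting is a prefix of an accepting execution of the system. -/
def DeadlockFree {P M : Type} [DecidableEq P] (S : P → CFSM (Act P M))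
    (Com : Set (Exec P M)) : Prop :=
  ∀ e ∈ ExecSys (sysUp S) Com, ∃ e' ∈ ExecSys S Com, e.IsPrefix e'

/-- A system is orphan-free for `Com` if all its executions are orphan-free. -/
def SysOrphanFree {P M : Type} [DecidableEq P] (S : P → CFSM (Act P M))
    (Com : Set (Exec P M)) : Prop :=
  ∀ e ∈ ExecSys S Com, e.OrphanFree

/-- An arrow `p→q:m` with `p ≠ q`. -/
def Arrow (P M : Type) : Type := {x : P × P × M // x.1 ≠ x.2.1}

namespace Arrow
variable {P M : Type}

def sender (a : Arrow P M) : P := a.1.1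
def receiver (a : Arrow P M) : P := a.1.2.1
def msg (a : Arrow P M) : M := a.1.2.2
def sendAct (a : Arrow P M) : Act P M := .snd a.sender a.receiver a.msg
def recvAct (a : Arrow P M) : Act P M := .rcv a.sender a.receiver a.msg

/-- Two arrows commute when their pairs of processes are disjoint. -/
def Commutes (a b : Arrow P M) : Prop :=
  a.sender ≠ b.sender ∧ a.sender ≠ b.receiver ∧
    a.receiver ≠ b.sender ∧ a.receiver ≠ b.receiver

instance [DecidableEq P] [Fintype P] [Fintype M] : Fintype (Arrow P M) :=
  Subtype.fintype _

end Arrow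

/-- A global type: a deterministic finite (possibly partial) automaton over arrows. -/
structure GType (P M : Type) : Type 1 where
  State : Type
  fin : Fintype State
  step : State → Arrow P M → Option State
  start : State
  accept : Set State

instance {P M : Type} (G : GType P M) : Fintype G.State := G.fin

namespace GType
variable {P M : Type}

def evalFrom (G : GType P M) (s : Option G.State) (w : List (Arrow P M)) : Option G.State :=
  w.foldl (fun s a => s.bind (fun q => G.step q a)) s

/-- The word language of a global type. -/
def lang (G : GType P M) : Set (List (Arrow P M)) :=
  {w | ∃ s, G.evalFrom (some G.start) w = some s ∧ s ∈ G.accept}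

/-- The arrows labelling the outgoing transitions of a state. -/
def choices (G : GType P M) (s : G.State) : Set (Arrow P M) := {a | (G.step s a).isSome}

/-- Commutation-determinism: no two arrows available at a same state commute. -/
def CommDet (G : GType P M) : Prop :=
  ∀ s : G.State, ∀ a ∈ G.choices s, ∀ b ∈ G.choices s, ¬ a.Commutes b

/-- Sender-driven choice: all arrows available at a same state have the same sender. -/
def SenderDriven (G : GType P M) : Prop :=
  ∀ s : G.State, ∀ a ∈ G.choices s, ∀ b ∈ G.choices s, a.sender = b.sender

end GType

/-- The synchronous execution coded by a sequence of arrows. -/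
def execOfArrows {P M : Type} (w : List (Arrow P M)) : Exec P M where
  w := (w.map (fun a => [a.sendAct, a.recvAct])).flatten
  src := fun i => i - 1

/-- The MSC coded by a sequence of arrows. -/
def mscOfArrows {P M : Type} [DecidableEq P] (w : List (Arrow P M)) : MSC P M :=
  (execOfArrows w).toMSC

/-- The set of MSCs of sequences of arrows (MSCs linearisable in the synchronous model). -/
def MSCsynch (P M : Type) [DecidableEq P] : Set (MSC P M) :=
  Set.range (mscOfArrows (P := P) (M := M))

/-- The existential MSC language of a global type. -/
def Lexists {P M : Type} [DecidableEq P] (G : GType P M) : Set (MSC P M) :=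
  mscOfArrows '' G.lang

/-- The universal MSC language of a global type. -/
def Lforall {P M : Type} [DecidableEq P] (G : GType P M) : Set (MSC P M) :=
  {Mm | (∃ w, mscOfArrows w = Mm) ∧ ∀ w, mscOfArrows w = Mm → w ∈ G.lang}

/-- A global type is commutation-closed when its existential and universal MSC
languages coincide. -/
def GType.CommClosed {P M : Type} [DecidableEq P] (G : GType P M) : Prop :=
  Lexists G = Lforall G

/-- The relabelling of an arrow for the projection onto process `p`. -/
def projLabel {P M : Type} [DecidableEq P] (p : P) (a : Arrow P M) : Option (Act P M) :=
  if a.sender = p then some a.sendAct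
  else if a.receiver = p then some a.recvAct
  else none

/-- The projected system of CFSMs of a global type. -/
def projG {P M : Type} [DecidableEq P] (G : GType P M) : P → CFSM (Act P M) :=
  fun p =>
    ⟨G.State, G.fin,
      { step := fun s oa =>
          {s' | ∃ arr : Arrow P M, G.step s arr = some s' ∧ projLabel p arr = oa},
        start := {G.start},
        accept := G.accept }⟩

/-- `Exec(G, Com)`: the semantics of a global type in a communication model. -/
def ExecG {P M : Type} [DecidableEq P] (G : GType P M) (Com : Set (Exec P M)) :
    Set (Exec P M) :=
  {e | ∃ Mm ∈ Lexists G, e ∈ linC Com Mm}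

/-- Deadlock-free realisability of a global type in a communication model:
(CC) conformance and (DF) deadlock freedom of the projected system. -/
def DFRealisable {P M : Type} [DecidableEq P] (G : GType P M) (Com : Set (Exec P M)) : Prop :=
  ExecSys (projG G) Com = ExecG G Com ∧ DeadlockFree (projG G) Com

/-- The synchronous product of a system of CFSMs: an ε-NFA over arrows. -/
def syncProd {P M : Type} (S : P → CFSM (Act P M)) :
    εNFA (Arrow P M) (∀ p, (S p).State) where
  step st oa :=
    match oa with
    | some a =>
        {st' | st' a.sender ∈ (S a.sender).aut.step (st a.sender) (some a.sendAct) ∧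
               st' a.receiver ∈ (S a.receiver).aut.step (st a.receiver) (some a.recvAct) ∧
               ∀ r, r ≠ a.sender → r ≠ a.receiver → st' r = st r}
    | none =>
        {st' | ∃ p, st' p ∈ (S p).aut.step (st p) none ∧ ∀ r, r ≠ p → st' r = st r}
  start := {st | ∀ p, st p ∈ (S p).aut.start}
  accept := {st | ∀ p, st p ∈ (S p).aut.accept}

/-- `prod(S)`: the powerset determinisation of the synchronous product, a global type. -/
noncomputable def prodG {P M : Type} [Fintype P] (S : P → CFSM (Act P M)) : GType P M :=
  let A := (syncProd S).toNFA.toDFA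
  { State := Set (∀ p, (S p).State)
    fin := by
      haveI : Finite (∀ p, (S p).State) := inferInstance
      exact Fintype.ofFinite _
    step := fun s a => some (A.step s a)
    start := A.start
    accept := A.accept }

/-- The product `G₁ ⊗ G₂` of two global types (language intersection). -/
def prodGT {P M : Type} (G₁ G₂ : GType P M) : GType P M where
  State := G₁.State × G₂.State
  fin := inferInstance
  step s a := (G₁.step s.1 a).bind fun q₁ => (G₂.step s.2 a).map fun q₂ => (q₁, q₂)
  start := (G₁.start, G₂.start)
  accept := {s | s.1 ∈ G₁.accept ∧ s.2 ∈ G₂.accept}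

/-- The dual of a global type: complete it and swap accepting and non-accepting states. -/
def dualG {P M : Type} (G : GType P M) : GType P M where
  State := Option G.State
  fin := inferInstance
  step s a := some (s.bind fun q => G.step q a)
  start := some G.start
  accept := {s | ∀ q, s = some q → q ∉ G.accept}

/-- RSC executions: every receive immediately follows its source send. -/
def RSCexec {P M : Type} : Set (Exec P M) :=
  {e | e.WF ∧ ∀ r, e.IsRecv r → e.src r = r - 1}

/-- The MSCs admitting an RSC linearisation. -/
def MSCrsc {P M : Type} [DecidableEq P] : Set (MSC P M) :=
  {Mm | ∃ e ∈ RSCexec (P := P) (M := M), e.toMSC = Mm}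

/-- A set of MSCs is RegSC if some NFA over actions accepts exactly the RSC executions
whose MSC belongs to the set. -/
def RegSCset {P M : Type} [DecidableEq P] (X : Set (MSC P M)) : Prop :=
  ∃ (σ : Type) (_ : Fintype σ) (A : NFA (Act P M) σ),
    ∀ w : List (Act P M),
      w ∈ A.accepts ↔ ∃ e ∈ RSCexec (P := P) (M := M), e.w = w ∧ e.toMSC ∈ X

/-- A communication model is RegSC if the set of its RSC-linearisable MSCs is RegSC. -/
def RegSCmodel {P M : Type} [DecidableEq P] (Com : Set (Exec P M)) : Prop :=
  RegSCset (MSCModel Com ∩ MSCrsc)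

section Aux

variable {P M : Type} [DecidableEq P]

/-- Projection contribution of one arrow to process `p`. -/
def parr (p : P) (a : Arrow P M) : List (Act P M) :=
  if a.sender = p then [a.sendAct] else if a.receiver = p then [a.recvAct] else []

lemma execOfArrows_cons (a : Arrow P M) (u : List (Arrow P M)) :
    (execOfArrows (a :: u)).w = a.sendAct :: a.recvAct :: (execOfArrows u).w := by
  simp [execOfArrows]

lemma mscW (w : List (Arrow P M)) (p : P) :
    (mscOfArrows w).w p = (w.map (parr p)).flatten := by
  induction w with
  | nil => simp [mscOfArrows, execOfArrows, Exec.toMSC]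
  | cons a u ih =>
    have hne : a.sender ≠ a.receiver := a.2
    show ((execOfArrows (a :: u)).w.filter (fun x => decide (x.proc = p))) = _
    rw [execOfArrows_cons]
    have hrest : ((execOfArrows u).w.filter (fun x => decide (x.proc = p)))
        = (u.map (parr p)).flatten := ih
    have hps : a.sendAct.proc = a.sender := rfl
    have hpr : a.recvAct.proc = a.receiver := rfl
    simp only [List.filter_cons, List.map_cons, List.flatten_cons, hps, hpr]
    by_cases hs : a.sender = p
    · have hr : a.receiver ≠ p := fun h => hne (hs.trans h.symm)
      simp [hs, hr, parr, hrest]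
    · by_cases hr : a.receiver = p
      · simp [hs, hr, parr, hrest]
      · simp [hs, hr, parr, hrest]

lemma sendAct_inj {a b : Arrow P M} (h : a.sendAct = b.sendAct) : a = b := by
  simp only [Arrow.sendAct, Act.snd.injEq] at h
  exact Subtype.ext (Prod.ext h.1 (Prod.ext h.2.1 h.2.2))

lemma recvAct_inj {a b : Arrow P M} (h : a.recvAct = b.recvAct) : a = b := by
  simp only [Arrow.recvAct, Act.rcv.injEq] at h
  exact Subtype.ext (Prod.ext h.1 (Prod.ext h.2.1 h.2.2))

lemma shares [Fintype P] (hP : Fintype.card P ≤ 3) (a b : Arrow P M) :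
    a.sender = b.sender ∨ a.sender = b.receiver ∨
      a.receiver = b.sender ∨ a.receiver = b.receiver := by
  by_contra h
  push_neg at h
  obtain ⟨h1, h2, h3, h4⟩ := h
  have ha : a.sender ≠ a.receiver := a.2
  have hb : b.sender ≠ b.receiver := b.2
  have hcard : ({a.sender, a.receiver, b.sender, b.receiver} : Finset P).card = 4 := by
    rw [Finset.card_insert_of_notMem (by simp [ha, h1, h2]),
        Finset.card_insert_of_notMem (by simp [h3, h4]),
        Finset.card_insert_of_notMem (by simp [hb])]
    simp
  have hle := Finset.card_le_univ ({a.sender, a.receiver, b.sender, b.receiver} : Finset P)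
  rw [hcard] at hle
  omega

/-- If `p` touches both `a` and `b`, equality of the `p`-projections of
`a :: u` and `b :: v` forces `a = b`. -/
lemma head_eq {a b : Arrow P M} {u v : List (Arrow P M)} (p : P)
    (hpa : a.sender = p ∨ a.receiver = p) (hpb : b.sender = p ∨ b.receiver = p)
    (h : (mscOfArrows (a :: u)).w p = (mscOfArrows (b :: v)).w p) : a = b := by
  rw [mscW, mscW] at h
  simp only [List.map_cons, List.flatten_cons] at h
  have hxa : parr p a = [a.sendAct] ∨ parr p a = [a.recvAct] := by
    unfold parr
    rcases hpa with hpa | hpa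
    · left; simp [hpa]
    · by_cases hs : a.sender = p
      · left; simp [hs]
      · right; simp [hs, hpa]
  have hxb : parr p b = [b.sendAct] ∨ parr p b = [b.recvAct] := by
    unfold parr
    rcases hpb with hpb | hpb
    · left; simp [hpb]
    · by_cases hs : b.sender = p
      · left; simp [hs]
      · right; simp [hs, hpb]
  rcases hxa with hxa | hxa <;> rcases hxb with hxb | hxb <;>
    rw [hxa, hxb] at h <;>
    simp only [List.cons_append, List.cons.injEq] at h
  · exact sendAct_inj h.1
  · exact absurd h.1 (by simp [Arrow.sendAct, Arrow.recvAct])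
  · exact absurd h.1 (by simp [Arrow.sendAct, Arrow.recvAct])
  · exact recvAct_inj h.1

lemma msc_inj [Fintype P] (hP : Fintype.card P ≤ 3) :
    ∀ w w' : List (Arrow P M), (∀ p, (mscOfArrows w).w p = (mscOfArrows w').w p) →
      w = w' := by
  intro w
  induction w with
  | nil =>
    intro w' h
    cases w' with
    | nil => rfl
    | cons b v =>
      have hb := h b.sender
      rw [mscW, mscW] at hb
      simp [parr] at hb
  | cons a u ih =>
    intro w' h
    cases w' with
    | nil =>
      have hb := h a.sender
      rw [mscW, mscW] at hb
      simp [parr] at hb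
    | cons b v =>
      have hab : a = b := by
        rcases shares hP a b with hs | hs | hs | hs
        · exact head_eq a.sender (Or.inl rfl) (Or.inl hs.symm) (h a.sender)
        · exact head_eq a.sender (Or.inl rfl) (Or.inr hs.symm) (h a.sender)
        · exact head_eq a.receiver (Or.inr rfl) (Or.inl hs.symm) (h a.receiver)
        · exact head_eq a.receiver (Or.inr rfl) (Or.inr hs.symm) (h a.receiver)
      subst hab
      have htail : ∀ p, (mscOfArrows u).w p = (mscOfArrows v).w p := by
        intro p
        have hp := h p
        rw [mscW, mscW] at hp
        simp only [List.map_cons, List.flatten_cons] at hp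
        have := List.append_cancel_left hp
        rw [mscW, mscW]
        exact this
      rw [ih v htail]

lemma mscOfArrows_inj [Fintype P] (hP : Fintype.card P ≤ 3)
    {w w' : List (Arrow P M)} (h : mscOfArrows w = mscOfArrows w') : w = w' :=
  msc_inj hP w w' (fun p => congrFun (congrArg MSC.w h) p)

end Aux

/-- with at most 3 processes, every global type is commutation-closed. -/
theorem stmt4 (P Mg : Type) [Fintype P] [DecidableEq P] [Fintype Mg] [DecidableEq Mg]
    (hP : Fintype.card P ≤ 3) (G : GType P Mg) :
    G.CommClosed := by
  unfold GType.CommClosed Lexists Lforall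
  ext Mm
  constructor
  · rintro ⟨w, hw, rfl⟩
    refine ⟨⟨w, rfl⟩, fun w' hw' => ?_⟩
    rw [mscOfArrows_inj hP hw']
    exact hw
  · rintro ⟨⟨w, hmw⟩, hall⟩
    exact ⟨w, hall w hmw, hmw⟩
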